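/- arXiv:1509.04839 — 8 statements merged into one kernel-verified Lean document; each statement's English description precedes it below -/
import Mathlib

section
/- Let X be a nonnegative random variable with strictly increasing CDF F_X on [0,M]. Let R:[0,M]→ℝ satisfy R(0)=0 and 0 ≤ R(x)-R(y) ≤ x-y for all 0 ≤ y ≤ x ≤ M (so R is 1-Lipschitz and increasing). Then for every x ∈ [0,M], R(x) equals the left-continuous quantile function of R(X) evaluated at F_X(x), i.e., R(x) = F⁻¹_{R(X)}(F_X(x)), where F⁻¹_Y(t) := inf{ z ≥ 0 : P(Y ≤ z) ≥ t }. -/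
open MeasureTheory Set

/-- Left-continuous quantile function of a random variable `Y` under measure `μ`:
`F⁻¹_Y(t) = inf { z ≥ 0 : P(Y ≤ z) ≥ t }`. -/
noncomputable def quantileFn {Ω : Type*} [MeasurableSpace Ω] (μ : Measure Ω)
    (Y : Ω → ℝ) (t : ℝ) : ℝ :=
  sInf {z : ℝ | 0 ≤ z ∧ t ≤ (μ {ω | Y ω ≤ z}).toReal}

/-- for `R` in the retention class, `R(x) = F⁻¹_{R(X)}(F_X(x))`
for all `x ∈ [0,M]`. -/
theorem retention_eq_quantile_of_cdf
    {Ω : Type*} [MeasurableSpace Ω] (μ : Measure Ω) [IsProbabilityMeasure μ]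
    (M : ℝ) (hM : 0 < M)
    (X : Ω → ℝ) (hXmeas : Measurable X)
    (hXrange : ∀ ω, X ω ∈ Icc 0 M)
    (hFstrict : ∀ x ∈ Icc 0 M, ∀ y ∈ Icc 0 M, x < y →
      (μ {ω | X ω ≤ x}).toReal < (μ {ω | X ω ≤ y}).toReal)
    (R : ℝ → ℝ) (hR0 : R 0 = 0)
    (hRlip : ∀ y x, 0 ≤ y → y ≤ x → x ≤ M →
      0 ≤ R x - R y ∧ R x - R y ≤ x - y) :
    ∀ x ∈ Icc 0 M,
      R x = quantileFn μ (fun ω => R (X ω)) ((μ {ω | X ω ≤ x}).toReal) := by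
  intro x hx
  obtain ⟨hx0, hxM⟩ := hx
  have hRmono : ∀ y x', 0 ≤ y → y ≤ x' → x' ≤ M → R y ≤ R x' := by
    intro y x' h0 h1 h2
    have := (hRlip y x' h0 h1 h2).1; linarith
  have hRx0 : 0 ≤ R x := by
    have := hRmono 0 x le_rfl hx0 hxM; rwa [hR0] at this
  set Q : Set ℝ :=
    {z : ℝ | 0 ≤ z ∧ (μ {ω | X ω ≤ x}).toReal ≤ (μ {ω | R (X ω) ≤ z}).toReal} with hQ
  have hmem : R x ∈ Q := by
    refine ⟨hRx0, ?_⟩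
    refine ENNReal.toReal_mono (measure_ne_top μ _) (measure_mono ?_)
    intro ω hω
    exact hRmono (X ω) x (hXrange ω).1 hω hxM
  have hbdd : BddBelow Q := ⟨0, fun z hz => hz.1⟩
  have hle : sInf Q ≤ R x := csInf_le hbdd hmem
  have hge : R x ≤ sInf Q := by
    apply le_csInf ⟨R x, hmem⟩
    intro z hz
    by_contra hlt
    push_neg at hlt
    obtain ⟨hz0, hzP⟩ := hz
    set S : Set ℝ := {t : ℝ | t ∈ Icc 0 M ∧ R t ≤ z} with hS
    have h0S : (0:ℝ) ∈ S := ⟨⟨le_rfl, hM.le⟩, by rw [hR0]; exact hz0⟩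
    have hSbdd : BddAbove S := ⟨M, fun t ht => ht.1.2⟩
    set y : ℝ := sSup S with hy
    have hy0 : 0 ≤ y := le_csSup hSbdd h0S
    have hyM : y ≤ M := csSup_le ⟨0, h0S⟩ (fun t ht => ht.1.2)
    have hRy : R y ≤ z := by
      by_contra h
      push_neg at h
      obtain ⟨t, htS, htgt⟩ := exists_lt_of_lt_csSup ⟨0, h0S⟩
        (show y - (R y - z) < y by linarith)
      have hty : t ≤ y := le_csSup hSbdd htS
      have h1 := (hRlip t y htS.1.1 hty hyM).2
      have h2 := htS.2
      linarith
    have hyx : y < x := by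
      by_contra h
      push_neg at h
      have := hRmono x y hx0 h hyM
      linarith
    have hsub : {ω | R (X ω) ≤ z} ⊆ {ω | X ω ≤ y} := by
      intro ω hω
      exact le_csSup hSbdd ⟨hXrange ω, hω⟩
    have h1 : (μ {ω | R (X ω) ≤ z}).toReal ≤ (μ {ω | X ω ≤ y}).toReal :=
      ENNReal.toReal_mono (measure_ne_top μ _) (measure_mono hsub)
    have h2 := hFstrict y ⟨hy0, hyM⟩ x ⟨hx0, hxM⟩ hyx
    linarith
  show R x = sInf Q
  exact le_antisymm hge hle
end

section
/- Let T : [0,1] → [0,1] be continuous, strictly increasing, onto, twice differentiable on (0,1), with T' strictly decreasing on (0,b) and strictly increasing on (b,1) for some b ∈ (0,1), T'(0+) > 1 and T'(1-) = +∞. Define f(z) = (1-T(z))/(1-z) for z ∈ [0,1). Then there exists a unique a ∈ (0,b) such that f is strictly decreasing on [0,a] and strictly increasing on [a,1). Moreover, a satisfies T'(a) = (1-T(a))/(1-a). -/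
open Set Filter Topology

/-!
Write `g z = tangentDefect T z = 1 - T z - T'(z) (1 - z)` for the amount by which the tangent
line of `T` at `z` misses the point `(1, 1)`; then `f' = g / (1 - z) ^ 2`, so `f` turns exactly
where `g` changes sign, and `g a = 0` is the equation `T'(a) = f(a)`. On the concave part `(0, b)`
the function `g` is strictly increasing (mean value theorem), it tends to `1 - T'(0+) < 0` at `0`,
and on the convex part `[b, 1)` it is positive because the chord from `z` to `1` is steeper than
the tangent at `z`. Hence `g` has a unique zero `a ∈ (0, b)`, negative before it and positive
after it.
-/

section

variable {α β : Type*} [LinearOrder α] [TopologicalSpace α] [OrderTopology α]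
  [DenselyOrdered α] [LinearOrder β] [TopologicalSpace β] [OrderClosedTopology β]
  {f : α → β} {p q : α}

theorem StrictMonoOn.Ico_of_continuousWithinAt (hf : StrictMonoOn f (Ioo p q))
    (hp : ContinuousWithinAt f (Ioi p) p) : StrictMonoOn f (Ico p q) := by
  intro x hx y hy hxy
  rcases hx.1.eq_or_lt with rfl | hpx
  · obtain ⟨m, hpm, hmy⟩ := exists_between hxy
    have hmq : m < q := hmy.trans hy.2
    have : (𝓝[Ioo p m] p).NeBot := left_nhdsWithin_Ioo_neBot hpm
    have hle : f p ≤ f m := by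
      refine le_of_tendsto (x := 𝓝[Ioo p m] p) (hp.mono Ioo_subset_Ioi_self) ?_
      filter_upwards [self_mem_nhdsWithin] with t ht
      exact (hf ⟨ht.1, ht.2.trans hmq⟩ ⟨hpm, hmq⟩ ht.2).le
    exact hle.trans_lt (hf ⟨hpm, hmq⟩ ⟨hpm.trans hmy, hy.2⟩ hmy)
  · exact hf ⟨hpx, hx.2⟩ ⟨hpx.trans hxy, hy.2⟩ hxy

end

theorem exists_zero_of_strictMonoOn_of_pos {g : ℝ → ℝ} {p b q : ℝ} (hbq : b < q)
    (hg : ContinuousOn g (Ioc p b)) (hmono : StrictMonoOn g (Ioo p b))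
    (hpos : ∀ x ∈ Ico b q, 0 < g x) (hneg : ∃ ε ∈ Ioo p b, g ε < 0) :
    ∃ a ∈ Ioo p b, g a = 0 ∧ (∀ x ∈ Ioo p a, g x < 0) ∧ ∀ x ∈ Ioo a q, 0 < g x := by
  obtain ⟨ε, hε, hgε⟩ := hneg
  obtain ⟨a, ha, hga⟩ := intermediate_value_Icc hε.2.le (hg.mono (Icc_subset_Ioc_left hε.1))
    ⟨hgε.le, (hpos b ⟨le_rfl, hbq⟩).le⟩
  have hab : a < b := ha.2.lt_of_ne fun h => (hpos b ⟨le_rfl, hbq⟩).ne' (h ▸ hga)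
  have hpa : p < a := hε.1.trans_le ha.1
  refine ⟨a, ⟨hpa, hab⟩, hga, fun x hx => ?_, fun x hx => ?_⟩
  · exact hga ▸ hmono ⟨hx.1, hx.2.trans hab⟩ ⟨hpa, hab⟩ hx.2
  · rcases lt_or_ge x b with hxb | hbx
    · exact hga ▸ hmono ⟨hpa, hab⟩ ⟨hpa.trans hx.1, hxb⟩ hx.1
    · exact hpos x ⟨hbx, hx.2⟩

noncomputable def tangentDefect (T : ℝ → ℝ) (z : ℝ) : ℝ := 1 - T z - deriv T z * (1 - z)

section

variable {T : ℝ → ℝ}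

theorem tangentDefect_eq_zero_iff {z : ℝ} (hz : z ≠ 1) :
    tangentDefect T z = 0 ↔ deriv T z = (1 - T z) / (1 - z) := by
  rw [tangentDefect, eq_div_iff (sub_ne_zero.mpr hz.symm), sub_eq_zero, eq_comm]

theorem hasDerivAt_one_sub_div_one_sub {z : ℝ} (hT : DifferentiableAt ℝ T z) (hz : z ≠ 1) :
    HasDerivAt (fun x => (1 - T x) / (1 - x)) (tangentDefect T z / (1 - z) ^ 2) z := by
  refine ((hT.hasDerivAt.const_sub 1).fun_div ((hasDerivAt_id' z).const_sub 1)
    (sub_ne_zero.mpr hz.symm)).congr_deriv ?_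
  rw [tangentDefect]
  ring

theorem continuousAt_tangentDefect {z : ℝ} (hT : DifferentiableAt ℝ T z)
    (hT' : DifferentiableAt ℝ (deriv T) z) : ContinuousAt (tangentDefect T) z :=
  (continuousAt_const.sub hT.continuousAt).sub
    (hT'.continuousAt.mul (continuousAt_const.sub continuousAt_id))

theorem tendsto_tangentDefect_nhdsGT_zero (hT0 : T 0 = 0) (hT : ContinuousWithinAt T (Ioi 0) 0)
    {L : ℝ} (hT' : Tendsto (deriv T) (𝓝[>] 0) (𝓝 L)) :
    Tendsto (tangentDefect T) (𝓝[>] 0) (𝓝 (1 - L)) := by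
  have h : Tendsto (fun z => 1 - T z - deriv T z * (1 - z)) (𝓝[>] 0)
      (𝓝 (1 - T 0 - L * (1 - 0))) :=
    (tendsto_const_nhds.sub hT.tendsto).sub
      (hT'.mul (tendsto_const_nhds.sub (tendsto_id.mono_left nhdsWithin_le_nhds)))
  simp only [hT0, sub_zero, mul_one] at h
  exact h

theorem strictMonoOn_tangentDefect {s : Set ℝ} (hs : s.OrdConnected) (hs1 : s ⊆ Iio 1)
    (hT : ∀ z ∈ s, DifferentiableAt ℝ T z) (hT' : StrictAntiOn (deriv T) s) :
    StrictMonoOn (tangentDefect T) s := by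
  intro x hx y hy hxy
  have hIcc : Icc x y ⊆ s := hs.out hx hy
  obtain ⟨c, hc, hslope⟩ := exists_deriv_eq_slope T hxy
    (fun z hz => (hT z (hIcc hz)).continuousAt.continuousWithinAt)
    (fun z hz => (hT z (hIcc (Ioo_subset_Icc_self hz))).differentiableWithinAt)
  have hcs : c ∈ s := hIcc (Ioo_subset_Icc_self hc)
  have hTxy : T y - T x = deriv T c * (y - x) := by
    rw [hslope, div_mul_cancel₀ _ (sub_ne_zero.mpr hxy.ne')]
  have hdiff : tangentDefect T y - tangentDefect T x =
      (deriv T x - deriv T c) * (1 - x) + (deriv T c - deriv T y) * (1 - y) := by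
    simp only [tangentDefect]
    linear_combination -hTxy
  have h₁ := mul_pos (sub_pos.mpr (hT' hx hcs hc.1)) (sub_pos.mpr (hs1 hx))
  have h₂ := mul_pos (sub_pos.mpr (hT' hcs hy hc.2)) (sub_pos.mpr (hs1 hy))
  linarith

theorem tangentDefect_pos (hT1 : T 1 = 1) {x : ℝ} (hx : x < 1) (hT : ContinuousOn T (Icc x 1))
    (hTd : ∀ z ∈ Ioo x 1, DifferentiableAt ℝ T z) (hT' : StrictMonoOn (deriv T) (Ico x 1)) :
    0 < tangentDefect T x := by
  obtain ⟨c, hc, hslope⟩ :=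
    exists_deriv_eq_slope T hx hT fun z hz => (hTd z hz).differentiableWithinAt
  have hchord : tangentDefect T x = (deriv T c - deriv T x) * (1 - x) := by
    rw [tangentDefect, hslope, hT1]
    field_simp [sub_ne_zero.mpr hx.ne']
  rw [hchord]
  exact mul_pos (sub_pos.mpr (hT' (left_mem_Ico.mpr hx) (Ioo_subset_Ico_self hc) hc.1))
    (sub_pos.mpr hx)

theorem strictAntiOn_one_sub_div_one_sub {D : Set ℝ} (hD : Convex ℝ D) (hD1 : D ⊆ Iio 1)
    (hT : ContinuousOn T D) (hTd : ∀ z ∈ interior D, DifferentiableAt ℝ T z)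
    (hneg : ∀ z ∈ interior D, tangentDefect T z < 0) :
    StrictAntiOn (fun x => (1 - T x) / (1 - x)) D := by
  refine strictAntiOn_of_deriv_neg hD ((continuousOn_const.sub hT).div
    (continuousOn_const.sub continuousOn_id) fun x hx => sub_ne_zero.mpr (hD1 hx).ne')
    fun z hz => ?_
  have hz1 : z < 1 := hD1 (interior_subset hz)
  rw [(hasDerivAt_one_sub_div_one_sub (hTd z hz) hz1.ne).deriv]
  exact div_neg_of_neg_of_pos (hneg z hz) (pow_pos (sub_pos.mpr hz1) 2)

theorem strictMonoOn_one_sub_div_one_sub {D : Set ℝ} (hD : Convex ℝ D) (hD1 : D ⊆ Iio 1)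
    (hT : ContinuousOn T D) (hTd : ∀ z ∈ interior D, DifferentiableAt ℝ T z)
    (hpos : ∀ z ∈ interior D, 0 < tangentDefect T z) :
    StrictMonoOn (fun x => (1 - T x) / (1 - x)) D := by
  refine strictMonoOn_of_deriv_pos hD ((continuousOn_const.sub hT).div
    (continuousOn_const.sub continuousOn_id) fun x hx => sub_ne_zero.mpr (hD1 hx).ne')
    fun z hz => ?_
  have hz1 : z < 1 := hD1 (interior_subset hz)
  rw [(hasDerivAt_one_sub_div_one_sub (hTd z hz) hz1.ne).deriv]
  exact div_pos (hpos z hz) (pow_pos (sub_pos.mpr hz1) 2)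

end

theorem exists_unique_turning_point_general
    (T : ℝ → ℝ) (b : ℝ) (hb : b ∈ Ioo (0:ℝ) 1)
    (hTcont : ContinuousOn T (Icc 0 1))
    (hT0 : T 0 = 0) (hT1 : T 1 = 1)
    (hTdiff : ∀ z ∈ Ioo (0:ℝ) 1, DifferentiableAt ℝ T z)
    (hTdiff2 : ∀ z ∈ Ioo (0:ℝ) 1, DifferentiableAt ℝ (deriv T) z)
    (hT'anti : StrictAntiOn (deriv T) (Ioo 0 b))
    (hT'mono : StrictMonoOn (deriv T) (Ioo b 1))
    (L : ℝ) (hT'0 : Tendsto (deriv T) (nhdsWithin 0 (Ioi 0)) (nhds L)) (hL : 1 < L) :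
    ∃! a : ℝ, a ∈ Ioo 0 b ∧
      StrictAntiOn (fun z => (1 - T z) / (1 - z)) (Icc 0 a) ∧
      StrictMonoOn (fun z => (1 - T z) / (1 - z)) (Ico a 1) ∧
      deriv T a = (1 - T a) / (1 - a) := by
  have hb1 : Ioo 0 b ⊆ Iio 1 := fun z hz => hz.2.trans hb.2
  have hmono : StrictMonoOn (tangentDefect T) (Ioo 0 b) :=
    strictMonoOn_tangentDefect ordConnected_Ioo hb1 (fun z hz => hTdiff z ⟨hz.1, hb1 hz⟩)
      hT'anti
  have hpos : ∀ x ∈ Ico b 1, 0 < tangentDefect T x := fun x hx =>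
    tangentDefect_pos hT1 hx.2 (hTcont.mono (Icc_subset_Icc (hb.1.le.trans hx.1) le_rfl))
      (fun z hz => hTdiff z ⟨hb.1.trans_le (hx.1.trans hz.1.le), hz.2⟩)
      ((hT'mono.Ico_of_continuousWithinAt (hTdiff2 b hb).continuousAt.continuousWithinAt).mono
        (Ico_subset_Ico_left hx.1))
  have hlim := tendsto_tangentDefect_nhdsGT_zero hT0
    ((hTcont 0 ⟨le_rfl, zero_le_one⟩).mono_of_mem_nhdsWithin (Icc_mem_nhdsGT zero_lt_one)) hT'0
  obtain ⟨ε, hgε, hε⟩ :=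
    ((hlim.eventually_lt_const (sub_neg.mpr hL)).and (Ioo_mem_nhdsGT hb.1)).exists
  obtain ⟨a, ha, hga, hleft, hright⟩ := exists_zero_of_strictMonoOn_of_pos hb.2
    (fun z hz => (continuousAt_tangentDefect (hTdiff z ⟨hz.1, hz.2.trans_lt hb.2⟩)
      (hTdiff2 z ⟨hz.1, hz.2.trans_lt hb.2⟩)).continuousWithinAt) hmono hpos ⟨ε, hε, hgε⟩
  have ha1 : a < 1 := hb1 ha
  refine ⟨a, ⟨ha, ?_, ?_, (tangentDefect_eq_zero_iff ha1.ne).mp hga⟩, ?_⟩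
  · refine strictAntiOn_one_sub_div_one_sub (convex_Icc 0 a) (fun z hz => hz.2.trans_lt ha1)
      (hTcont.mono (Icc_subset_Icc_right ha1.le)) ?_ ?_ <;> rw [interior_Icc]
    exacts [fun z hz => hTdiff z ⟨hz.1, hz.2.trans ha1⟩, hleft]
  · refine strictMonoOn_one_sub_div_one_sub (convex_Ico a 1) (fun z hz => hz.2)
      (hTcont.mono (Ico_subset_Icc_self.trans (Icc_subset_Icc_left ha.1.le)))
      ?_ ?_ <;> rw [interior_Ico]
    exacts [fun z hz => hTdiff z ⟨ha.1.trans hz.1, hz.2⟩, hright]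
  · rintro a' ⟨ha', -, -, hT'a'⟩
    exact hmono.injOn ha' ha (((tangentDefect_eq_zero_iff (hb1 ha').ne).mpr hT'a').trans hga.symm)

/-- for an inverse-S shaped probability weighting function `T`,
the function `f(z) = (1-T(z))/(1-z)` is strictly decreasing then strictly
increasing, with a unique turning point `a ∈ (0,b)` satisfying
`T'(a) = (1-T(a))/(1-a)`. -/
theorem exists_unique_turning_point
    (T : ℝ → ℝ) (b : ℝ) (hb : b ∈ Ioo (0:ℝ) 1)
    (hTcont : ContinuousOn T (Icc 0 1))
    (hTmono : StrictMonoOn T (Icc 0 1))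
    (hT0 : T 0 = 0) (hT1 : T 1 = 1)
    (hTdiff : ∀ z ∈ Ioo (0:ℝ) 1, DifferentiableAt ℝ T z)
    (hTdiff2 : ∀ z ∈ Ioo (0:ℝ) 1, DifferentiableAt ℝ (deriv T) z)
    (hT'anti : StrictAntiOn (deriv T) (Ioo 0 b))
    (hT'mono : StrictMonoOn (deriv T) (Ioo b 1))
    (L : ℝ) (hT'0 : Tendsto (deriv T) (nhdsWithin 0 (Ioi 0)) (nhds L)) (hL : 1 < L)
    (hT'1 : Tendsto (deriv T) (nhdsWithin 1 (Iio 1)) atTop) :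
    ∃! a : ℝ, a ∈ Ioo 0 b ∧
      StrictAntiOn (fun z => (1 - T z) / (1 - z)) (Icc 0 a) ∧
      StrictMonoOn (fun z => (1 - T z) / (1 - z)) (Ico a 1) ∧
      deriv T a = (1 - T a) / (1 - a) :=
  exists_unique_turning_point_general T b hb hTcont hT0 hT1 hTdiff hTdiff2 hT'anti hT'mono L hT'0 hL
end

section
/- With T as above and p(z) := (1-T(z)) - T'(z)(1-z), the function p satisfies p'(z) = -T''(z)(1-z); consequently p is strictly increasing on (0,b) and strictly decreasing on (b,1), with p(0+) = 1 - T'(0+) < 0 and p(b) > 0; hence p has a unique zero a in (0,b). -/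
/-!
Write `p z = T 1 - (T z + T' z (1 - z))`: the amount by which the tangent line of `T` at `z`
misses the value `T 1`. Since `T'` decreases on `(0, b)` and increases on `(b, 1)`, `T` is strictly
concave on `(0, b)` and strictly convex on `[b, 1]`. Comparing tangent slopes with secant slopes,
the tangent gap is strictly increasing where `T` is concave and strictly decreasing where `T` is
convex, and it is positive at `b` because the tangent at `b` lies strictly below the chord to
`(1, T 1)`. Near `0` the gap tends to `1 - T'(0+) < 0`, so the intermediate value theorem and strict
monotonicity give exactly one zero in `(0, b)`.
-/

open Set Filter Topology

noncomputable section

def tangentGap (T : ℝ → ℝ) (c z : ℝ) : ℝ := T c - (T z + deriv T z * (c - z))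

variable {T : ℝ → ℝ} {c : ℝ}

theorem hasDerivAt_tangentGap {z : ℝ} (hT : DifferentiableAt ℝ T z)
    (hT' : DifferentiableAt ℝ (deriv T) z) :
    HasDerivAt (tangentGap T c) (-deriv (deriv T) z * (c - z)) z := by
  have h := (hT.hasDerivAt.add (hT'.hasDerivAt.mul ((hasDerivAt_id z).const_sub c))).const_sub (T c)
  exact h.congr_deriv (by simp only [id]; ring)

theorem tendsto_tangentGap {l : Filter ℝ} {a t L : ℝ} (hl : l ≤ 𝓝 a)
    (hT : Tendsto T l (𝓝 t)) (hT' : Tendsto (deriv T) l (𝓝 L)) :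
    Tendsto (tangentGap T c) l (𝓝 (T c - (t + L * (c - a)))) :=
  tendsto_const_nhds.sub (hT.add (hT'.mul (tendsto_const_nhds.sub (tendsto_id.mono_left hl))))

theorem tangentGap_sub_tangentGap {x y : ℝ} (hxy : x ≠ y) :
    tangentGap T c y - tangentGap T c x =
      (deriv T x - slope T x y) * (y - x) + (deriv T x - deriv T y) * (c - y) := by
  rw [tangentGap, tangentGap, slope_def_field]
  field_simp [sub_ne_zero.2 hxy.symm]
  ring

theorem StrictConvexOn.tangentGap_pos {S : Set ℝ} {z : ℝ} (hT : StrictConvexOn ℝ S T)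
    (hz : z ∈ S) (hc : c ∈ S) (hzc : z < c) (hd : DifferentiableAt ℝ T z) :
    0 < tangentGap T c z := by
  have hslope := hT.deriv_lt_slope hz hc hzc hd
  rw [slope_def_field, lt_div_iff₀ (sub_pos.2 hzc)] at hslope
  rw [tangentGap]
  linarith

theorem StrictConvexOn.strictAntiOn_tangentGap {S : Set ℝ} (hT : StrictConvexOn ℝ S T)
    (hd : ∀ z ∈ S, DifferentiableAt ℝ T z) (hc : ∀ z ∈ S, z ≤ c) :
    StrictAntiOn (tangentGap T c) S := by
  intro x hx y hy hxy
  have h₁ := hT.deriv_lt_slope hx hy hxy (hd x hx)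
  have h₂ := hT.slope_lt_deriv hx hy hxy (hd y hy)
  have := tangentGap_sub_tangentGap (T := T) (c := c) hxy.ne
  nlinarith [hc y hy]

theorem StrictConcaveOn.strictMonoOn_tangentGap {S : Set ℝ} (hT : StrictConcaveOn ℝ S T)
    (hd : ∀ z ∈ S, DifferentiableAt ℝ T z) (hc : ∀ z ∈ S, z ≤ c) :
    StrictMonoOn (tangentGap T c) S := by
  intro x hx y hy hxy
  have h₁ := hT.slope_lt_deriv hx hy hxy (hd x hx)
  have h₂ := hT.deriv_lt_slope hx hy hxy (hd y hy)
  have := tangentGap_sub_tangentGap (T := T) (c := c) hxy.ne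
  nlinarith [hc y hy]

end

theorem StrictMonoOn.existsUnique_zero_of_tendsto {f : ℝ → ℝ} {a b l : ℝ}
    (hab : a < b) (hf : StrictMonoOn f (Ioo a b)) (hcont : ContinuousOn f (Ioc a b))
    (hlim : Tendsto f (𝓝[>] a) (𝓝 l)) (hl : l < 0) (hb : 0 < f b) :
    ∃! z, z ∈ Ioo a b ∧ f z = 0 := by
  obtain ⟨x, hx, hfx⟩ : ∃ x ∈ Ioo a b, f x < 0 :=
    (Filter.Eventually.and (Ioo_mem_nhdsGT hab) (hlim.eventually_lt_const hl)).exists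
  obtain ⟨z, hz, hfz⟩ := intermediate_value_Ioo hx.2.le
    (hcont.mono (Icc_subset_Ioc_iff hx.2.le |>.2 ⟨hx.1, le_rfl⟩)) ⟨hfx, hb⟩
  refine ⟨z, ⟨⟨hx.1.trans hz.1, hz.2⟩, hfz⟩, fun y hy => hf.injOn hy.1 ⟨hx.1.trans hz.1, hz.2⟩ ?_⟩
  rw [hy.2, hfz]

theorem p_unique_zero_general
    (T : ℝ → ℝ) (b : ℝ) (hb : b ∈ Ioo (0:ℝ) 1)
    (hTcont : ContinuousOn T (Icc 0 1))
    (hT0 : T 0 = 0) (hT1 : T 1 = 1)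
    (hTdiff : ∀ z ∈ Ioo (0:ℝ) 1, DifferentiableAt ℝ T z)
    (hTdiff2 : ∀ z ∈ Ioo (0:ℝ) 1, DifferentiableAt ℝ (deriv T) z)
    (hT'anti : StrictAntiOn (deriv T) (Ioo 0 b))
    (hT'mono : StrictMonoOn (deriv T) (Ioo b 1))
    (L : ℝ) (hT'0 : Tendsto (deriv T) (nhdsWithin 0 (Ioi 0)) (nhds L)) (hL : 1 < L)
    (p : ℝ → ℝ) (hp : ∀ z, p z = (1 - T z) - deriv T z * (1 - z)) :
    (∀ z ∈ Ioo (0:ℝ) 1, deriv p z = -(deriv (deriv T) z) * (1 - z)) ∧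
    StrictMonoOn p (Ioo 0 b) ∧
    StrictAntiOn p (Ioo b 1) ∧
    Tendsto p (nhdsWithin 0 (Ioi 0)) (nhds (1 - L)) ∧ 1 - L < 0 ∧
    p b > 0 ∧
    (∃! a : ℝ, a ∈ Ioo 0 b ∧ p a = 0) := by
  obtain ⟨hb0, hb1⟩ := hb
  have hp_eq : p = tangentGap T 1 := funext fun z => by rw [hp, tangentGap, hT1]; ring
  subst hp_eq
  have hderiv z (hz : z ∈ Ioo (0:ℝ) 1) :=
    hasDerivAt_tangentGap (c := 1) (hTdiff z hz) (hTdiff2 z hz)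
  have hconcave : StrictConcaveOn ℝ (Ioo 0 b) T :=
    StrictAntiOn.strictConcaveOn_of_deriv (convex_Ioo 0 b)
      (fun z hz => (hTdiff z ⟨hz.1, hz.2.trans hb1⟩).continuousAt.continuousWithinAt)
      (by rwa [interior_Ioo])
  have hconvex : StrictConvexOn ℝ (Icc b 1) T :=
    StrictMonoOn.strictConvexOn_of_deriv (convex_Icc b 1)
      (hTcont.mono (Icc_subset_Icc_left hb0.le)) (by rwa [interior_Icc])
  have hmono : StrictMonoOn (tangentGap T 1) (Ioo 0 b) :=
    hconcave.strictMonoOn_tangentGap (fun z hz => hTdiff z ⟨hz.1, hz.2.trans hb1⟩)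
      (fun z hz => (hz.2.trans hb1).le)
  have hanti : StrictAntiOn (tangentGap T 1) (Ioo b 1) :=
    (hconvex.subset Ioo_subset_Icc_self (convex_Ioo b 1)).strictAntiOn_tangentGap
      (fun z hz => hTdiff z ⟨hb0.trans hz.1, hz.2⟩) (fun z hz => hz.2.le)
  have hlim : Tendsto (tangentGap T 1) (𝓝[>] 0) (𝓝 (1 - L)) := by
    have hT0' : Tendsto T (𝓝[>] 0) (𝓝 (T 0)) :=
      ((hTcont 0 (left_mem_Icc.2 zero_le_one)).mono_of_mem_nhdsWithin (Icc_mem_nhdsGT one_pos))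
    simpa [hT0, hT1] using tendsto_tangentGap (c := 1) nhdsWithin_le_nhds hT0' hT'0
  have hpos : 0 < tangentGap T 1 b :=
    hconvex.tangentGap_pos (left_mem_Icc.2 hb1.le) (right_mem_Icc.2 hb1.le) hb1
      (hTdiff b ⟨hb0, hb1⟩)
  refine ⟨fun z hz => (hderiv z hz).deriv, hmono, hanti, hlim, by linarith, hpos,
    hmono.existsUnique_zero_of_tendsto hb0 ?_ hlim (by linarith) hpos⟩
  exact fun z hz => (hderiv z ⟨hz.1, hz.2.trans_lt hb1⟩).continuousAt.continuousWithinAt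

/-- with `p(z) = (1-T(z)) - T'(z)(1-z)`, one has
`p'(z) = -T''(z)(1-z)`; `p` is strictly increasing on `(0,b)`, strictly
decreasing on `(b,1)`, `p(0+) = 1 - T'(0+) < 0`, `p(b) > 0`; hence `p` has a
unique zero `a` in `(0,b)`. -/
theorem p_unique_zero
    (T : ℝ → ℝ) (b : ℝ) (hb : b ∈ Ioo (0:ℝ) 1)
    (hTcont : ContinuousOn T (Icc 0 1))
    (hTmono : StrictMonoOn T (Icc 0 1))
    (hT0 : T 0 = 0) (hT1 : T 1 = 1)
    (hTdiff : ∀ z ∈ Ioo (0:ℝ) 1, DifferentiableAt ℝ T z)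
    (hTdiff2 : ∀ z ∈ Ioo (0:ℝ) 1, DifferentiableAt ℝ (deriv T) z)
    (hT'anti : StrictAntiOn (deriv T) (Ioo 0 b))
    (hT'mono : StrictMonoOn (deriv T) (Ioo b 1))
    (L : ℝ) (hT'0 : Tendsto (deriv T) (nhdsWithin 0 (Ioi 0)) (nhds L)) (hL : 1 < L)
    (hT'1 : Tendsto (deriv T) (nhdsWithin 1 (Iio 1)) atTop)
    (p : ℝ → ℝ) (hp : ∀ z, p z = (1 - T z) - deriv T z * (1 - z)) :
    (∀ z ∈ Ioo (0:ℝ) 1, deriv p z = -(deriv (deriv T) z) * (1 - z)) ∧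
    StrictMonoOn p (Ioo 0 b) ∧
    StrictAntiOn p (Ioo b 1) ∧
    Tendsto p (nhdsWithin 0 (Ioi 0)) (nhds (1 - L)) ∧ 1 - L < 0 ∧
    p b > 0 ∧
    (∃! a : ℝ, a ∈ Ioo 0 b ∧ p a = 0) :=
  p_unique_zero_general T b hb hTcont hT0 hT1 hTdiff hTdiff2 hT'anti hT'mono L hT'0 hL p hp
end

section
/- Let T be an inverse-S shaped weighting function with f(z) = (1-T(z))/(1-z) strictly increasing on [a,1). If a < z₂ < b and z₂ < z₁ < 1, then (1-T(z₁))/(1-z₁) > (T(z₁)-T(z₂))/(z₁-z₂). -/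
open Set

/-- Lemma A.1-(ii): if `f(z) = (1-T(z))/(1-z)` is strictly
increasing on `[a,1)`, then for `a < z₂ < b` and `z₂ < z₁ < 1` one has
`(1-T(z₁))/(1-z₁) > (T(z₁)-T(z₂))/(z₁-z₂)`. -/
theorem slope_comparison
    (T : ℝ → ℝ) (b : ℝ) (hb : b ∈ Ioo (0:ℝ) 1)
    (hTcont : ContinuousOn T (Icc 0 1))
    (hTmono : StrictMonoOn T (Icc 0 1))
    (hT0 : T 0 = 0) (hT1 : T 1 = 1)
    (a : ℝ) (ha : a ∈ Ioo 0 b)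
    (hfmono : StrictMonoOn (fun z => (1 - T z) / (1 - z)) (Ico a 1))
    (z₁ z₂ : ℝ) (h1 : a < z₂) (h2 : z₂ < b) (h3 : z₂ < z₁) (h4 : z₁ < 1) :
    (1 - T z₁) / (1 - z₁) > (T z₁ - T z₂) / (z₁ - z₂) := by
  have hf : (1 - T z₂) / (1 - z₂) < (1 - T z₁) / (1 - z₁) :=
    hfmono ⟨h1.le, h3.trans h4⟩ ⟨(h1.trans h3).le, h4⟩ h3
  rw [div_lt_div_iff₀ (by linarith) (by linarith)] at hf
  rw [gt_iff_lt, div_lt_div_iff₀ (by linarith) (by linarith)]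
  nlinarith [hf]
end

section
/- Let u : ℝ⁺ → ℝ⁺ be strictly increasing and twice differentiable with u' strictly decreasing, and suppose the absolute risk aversion A_u(z) = -u''(z)/u'(z) is strictly decreasing. Fix x > 0 and define q(z) := u'(x+z)·u'(x-z) for z ∈ (0,x). Then q is strictly increasing on (0,x). -/
/-!
Differentiating, `q' z = u'' (x + z) u' (x - z) - u' (x + z) u'' (x - z)`, which is positive
exactly when the logarithmic derivative `u'' / u' = -A_u` of `u'` is larger at `x + z` than at
`x - z`. Since `A_u` is strictly decreasing, `u'' / u'` is strictly increasing.
-/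

open Set

theorem hasDerivAt_comp_add_mul_comp_sub {𝕜 : Type*} [NontriviallyNormedField 𝕜]
    {f : 𝕜 → 𝕜} {a b x z : 𝕜} (ha : HasDerivAt f a (x + z)) (hb : HasDerivAt f b (x - z)) :
    HasDerivAt (fun z => f (x + z) * f (x - z)) (a * f (x - z) - f (x + z) * b) z := by
  have hadd : HasDerivAt (fun z => f (x + z)) a z := by
    simpa using ha.comp_const_add x z
  have hsub : HasDerivAt (fun z => f (x - z)) (-b) z := by
    simpa using hb.comp_const_sub x z
  exact (hadd.fun_mul hsub).congr_deriv (by ring)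

theorem strictMonoOn_comp_add_mul_comp_sub {f f' : ℝ → ℝ} (x : ℝ)
    (hf : ∀ y ∈ Ioi (0 : ℝ), HasDerivAt f (f' y) y) (hpos : ∀ y ∈ Ioi (0 : ℝ), 0 < f y)
    (hlog : StrictMonoOn (fun y => f' y / f y) (Ioi 0)) :
    StrictMonoOn (fun z => f (x + z) * f (x - z)) (Ioo 0 x) := by
  have hderiv : ∀ z ∈ Ioo 0 x, HasDerivAt (fun z => f (x + z) * f (x - z))
      (f' (x + z) * f (x - z) - f (x + z) * f' (x - z)) z := fun z ⟨hz0, hzx⟩ =>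
    hasDerivAt_comp_add_mul_comp_sub (hf _ (mem_Ioi.2 (by linarith)))
      (hf _ (mem_Ioi.2 (by linarith)))
  refine strictMonoOn_of_deriv_pos (convex_Ioo 0 x)
    (fun z hz => (hderiv z hz).continuousAt.continuousWithinAt) fun z hz => ?_
  rw [interior_Ioo] at hz
  obtain ⟨hz0, hzx⟩ := hz
  have hlt : x - z ∈ Ioi (0 : ℝ) := mem_Ioi.2 (by linarith)
  have hgt : x + z ∈ Ioi (0 : ℝ) := mem_Ioi.2 (by linarith)
  have hcross := hlog hlt hgt (by linarith)
  rw [div_lt_div_iff₀ (hpos _ hlt) (hpos _ hgt)] at hcross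
  rw [(hderiv z ⟨hz0, hzx⟩).deriv]
  linarith

theorem product_marginal_strictMono_general
    (u : ℝ → ℝ)
    (hdiff2 : ∀ z ∈ Ioi (0:ℝ), DifferentiableAt ℝ (deriv u) z)
    (hu'pos : ∀ z ∈ Ioi (0:ℝ), 0 < deriv u z)
    (hAanti : StrictAntiOn (fun z => -(deriv (deriv u) z) / deriv u z) (Ioi 0))
    (x : ℝ) :
    StrictMonoOn (fun z => deriv u (x + z) * deriv u (x - z)) (Ioo 0 x) := by
  refine strictMonoOn_comp_add_mul_comp_sub x (fun y hy => (hdiff2 y hy).hasDerivAt) hu'pos ?_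
  simpa only [neg_div, neg_neg] using hAanti.neg

/-- Lemma A.2: if the absolute risk aversion
`A_u(z) = -u''(z)/u'(z)` is strictly decreasing, then for fixed `x > 0`
the function `q(z) = u'(x+z)·u'(x-z)` is strictly increasing on `(0,x)`. -/
theorem product_marginal_strictMono
    (u : ℝ → ℝ)
    (humono : StrictMonoOn u (Ici 0))
    (hdiff : ∀ z ∈ Ioi (0:ℝ), DifferentiableAt ℝ u z)
    (hdiff2 : ∀ z ∈ Ioi (0:ℝ), DifferentiableAt ℝ (deriv u) z)
    (hu'pos : ∀ z ∈ Ioi (0:ℝ), 0 < deriv u z)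
    (hu'anti : StrictAntiOn (deriv u) (Ioi 0))
    (hAanti : StrictAntiOn (fun z => -(deriv (deriv u) z) / deriv u z) (Ioi 0))
    (x : ℝ) (hx : 0 < x) :
    StrictMonoOn (fun z => deriv u (x + z) * deriv u (x - z)) (Ioo 0 x) :=
  product_marginal_strictMono_general u hdiff2 hu'pos hAanti x
end

section
/- The set 𝔾 = {G : [0,1]→ℝ : G(0)=0, 0 ≤ G(a)-G(b) ≤ F_X⁻¹(a)-F_X⁻¹(b) for all 0 ≤ b ≤ a ≤ 1} is compact in C[0,1] with the sup-norm metric, provided F_X⁻¹ is continuous on [0,1]. -/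
open Set

lemma feasible_dist_le (F : C(Icc (0:ℝ) 1, ℝ)) (g : Icc (0:ℝ) 1 → ℝ)
    (hg : ∀ s t : Icc (0:ℝ) 1, s ≤ t → 0 ≤ g t - g s ∧ g t - g s ≤ F t - F s)
    (s t : Icc (0:ℝ) 1) : dist (g s) (g t) ≤ dist (F s) (F t) := by
  rcases le_total s t with h | h
  · obtain ⟨h1, h2⟩ := hg s t h
    rw [dist_comm, Real.dist_eq, dist_comm, Real.dist_eq,
      abs_of_nonneg h1, abs_of_nonneg (by linarith)]
    exact h2
  · obtain ⟨h1, h2⟩ := hg t s h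
    rw [Real.dist_eq, Real.dist_eq, abs_of_nonneg h1, abs_of_nonneg (by linarith)]
    exact h2

/-- Lemma B.1: the set
`𝔾 = {G : G(0)=0, 0 ≤ G(a)-G(b) ≤ F_X⁻¹(a)-F_X⁻¹(b) for all 0 ≤ b ≤ a ≤ 1}`
is compact in `C[0,1]` with the sup-norm metric, provided `F_X⁻¹` is a
continuous increasing function on `[0,1]`. -/
theorem feasible_set_compact
    (F : C(Icc (0:ℝ) 1, ℝ))
    (hFmono : ∀ s t : Icc (0:ℝ) 1, s ≤ t → F s ≤ F t) :
    IsCompact {G : C(Icc (0:ℝ) 1, ℝ) |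
      G ⟨0, by norm_num⟩ = 0 ∧
      ∀ s t : Icc (0:ℝ) 1, s ≤ t → 0 ≤ G t - G s ∧ G t - G s ≤ F t - F s} := by
  set z : Icc (0:ℝ) 1 := ⟨0, by norm_num⟩
  set S : Set C(Icc (0:ℝ) 1, ℝ) := {G : C(Icc (0:ℝ) 1, ℝ) |
      G z = 0 ∧
      ∀ s t : Icc (0:ℝ) 1, s ≤ t → 0 ≤ G t - G s ∧ G t - G s ≤ F t - F s}
  set T : Set (Icc (0:ℝ) 1 → ℝ) := {g | g z = 0 ∧
      ∀ s t : Icc (0:ℝ) 1, s ≤ t → 0 ≤ g t - g s ∧ g t - g s ≤ F t - F s}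
  -- continuity of elements of T
  have hcont : ∀ g ∈ T, Continuous g := by
    intro g hg
    rw [Metric.continuous_iff]
    intro b ε hε
    have hFc : ContinuousAt F b := F.continuous.continuousAt
    rw [Metric.continuousAt_iff] at hFc
    obtain ⟨δ, hδ, hδ'⟩ := hFc ε hε
    exact ⟨δ, hδ, fun a ha => lt_of_le_of_lt (feasible_dist_le F g hg.2 a b) (hδ' ha)⟩
  have himage : ContinuousMap.toFun '' S = T := by
    ext g
    constructor
    · rintro ⟨G, hG, rfl⟩; exact hG
    · intro hg
      exact ⟨⟨g, hcont g hg⟩, hg, rfl⟩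
  apply ArzelaAscoli.isCompact_of_equicontinuous
  · rw [himage]
    apply IsCompact.of_isClosed_subset (isCompact_univ_pi fun t => isCompact_Icc (a := (0:ℝ)) (b := F t - F z))
    · have hT : T = {g : Icc (0:ℝ) 1 → ℝ | g z = 0} ∩
          ⋂ (s : Icc (0:ℝ) 1) (t : Icc (0:ℝ) 1) (_ : s ≤ t),
            ({g : Icc (0:ℝ) 1 → ℝ | 0 ≤ g t - g s} ∩ {g | g t - g s ≤ F t - F s}) := by
        ext g
        simp only [T, mem_setOf_eq, mem_inter_iff, mem_iInter]
      rw [hT]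
      apply IsClosed.inter
      · exact isClosed_eq (continuous_apply z) continuous_const
      · apply isClosed_iInter; intro s; apply isClosed_iInter; intro t
        apply isClosed_iInter; intro _
        apply IsClosed.inter
        · exact isClosed_le continuous_const ((continuous_apply t).sub (continuous_apply s))
        · exact isClosed_le ((continuous_apply t).sub (continuous_apply s)) continuous_const
    · intro g hg
      intro t _
      obtain ⟨h1, h2⟩ := hg.2 z t t.2.1
      rw [hg.1] at h1 h2
      simpa using ⟨by linarith, by linarith⟩
  · intro b
    rw [Metric.equicontinuousAt_iff]
    intro ε hε
    have hFc : ContinuousAt F b := F.continuous.continuousAt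
    rw [Metric.continuousAt_iff] at hFc
    obtain ⟨δ, hδ, hδ'⟩ := hFc ε hε
    refine ⟨δ, hδ, fun a ha G => ?_⟩
    calc dist ((G : C(Icc (0:ℝ) 1, ℝ)) b) ((G : C(Icc (0:ℝ) 1, ℝ)) a)
        ≤ dist (F b) (F a) := by
          rw [dist_comm, dist_comm (F b)]
          exact feasible_dist_le F G G.2.2 a b
      _ < ε := by rw [dist_comm]; exact hδ' ha
end

section
/- (Yaari case, middle λ) With u(x)=x and T inverse-S shaped, let λ̂ < λ < 1 where λ̂ = min_z (1-T(z))/(1-z). Then there exist unique x₀ ∈ (0,a) and y₀ ∈ (a,c) with f(x₀) = f(y₀) = λ (where c is the unique solution in (a,1] of T(c)=c), and N_λ(z) = λ(1-z)-(1-T(z)) is negative on (0,x₀), positive on (x₀,y₀), and negative on (y₀,1). -/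
open Set Filter

/-- Yaari case, middle `λ`: if `λ̂ < λ < 1`, there exist unique
`x₀ ∈ (0,a)` and `y₀ ∈ (a,c)` with `f(x₀) = f(y₀) = λ`, and
`N_λ(z) = λ(1-z)-(1-T(z))` is negative on `(0,x₀)`, positive on `(x₀,y₀)`, and
negative on `(y₀,1)`. -/
theorem yaari_middle_lambda
    (T : ℝ → ℝ) (b : ℝ) (hb : b ∈ Ioo (0:ℝ) 1)
    (hTcont : ContinuousOn T (Icc 0 1))
    (hTmono : StrictMonoOn T (Icc 0 1)) (hT0 : T 0 = 0) (hT1 : T 1 = 1)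
    (a : ℝ) (ha : a ∈ Ioo 0 b)
    (hfanti : StrictAntiOn (fun z => (1 - T z) / (1 - z)) (Icc 0 a))
    (hfmono : StrictMonoOn (fun z => (1 - T z) / (1 - z)) (Ico a 1))
    (hftop : Tendsto (fun z => (1 - T z) / (1 - z)) (nhdsWithin 1 (Iio 1)) atTop)
    (c : ℝ) (hc : c ∈ Ioc a 1) (hTc : T c = c)
    (lamhat lam : ℝ) (hlamhat : lamhat = (1 - T a) / (1 - a))
    (hlam1 : lamhat < lam) (hlam2 : lam < 1) :
    ∃ x₀ y₀ : ℝ, x₀ ∈ Ioo 0 a ∧ y₀ ∈ Ioo a c ∧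
      (1 - T x₀) / (1 - x₀) = lam ∧ (1 - T y₀) / (1 - y₀) = lam ∧
      (∀ x' ∈ Ioo (0:ℝ) a, (1 - T x') / (1 - x') = lam → x' = x₀) ∧
      (∀ y' ∈ Ioo a c, (1 - T y') / (1 - y') = lam → y' = y₀) ∧
      (∀ z ∈ Ioo (0:ℝ) x₀, lam * (1 - z) - (1 - T z) < 0) ∧
      (∀ z ∈ Ioo x₀ y₀, lam * (1 - z) - (1 - T z) > 0) ∧
      (∀ z ∈ Ioo y₀ (1:ℝ), lam * (1 - z) - (1 - T z) < 0) := by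
  obtain ⟨hb0, hb1⟩ := hb
  obtain ⟨ha0, hab⟩ := ha
  obtain ⟨hac, hc1⟩ := hc
  set f : ℝ → ℝ := fun z => (1 - T z) / (1 - z) with hfdef
  have ha1 : a < 1 := hab.trans hb1
  -- continuity of f on [0,d] for d < 1
  have hfcont : ∀ p d : ℝ, 0 ≤ p → d ≤ 1 → d < 1 → ContinuousOn f (Icc p d) := by
    intro p d hp hd1 hd1'
    apply ContinuousOn.div
    · exact continuousOn_const.sub (hTcont.mono (Icc_subset_Icc hp hd1))
    · exact continuousOn_const.sub continuousOn_id
    · intro z hz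
      have : z < 1 := lt_of_le_of_lt hz.2 hd1'
      intro h; linarith [sub_eq_zero.mp h]

  have hf0 : f 0 = 1 := by simp [hfdef, hT0]
  have hfa : f a = lamhat := by rw [hlamhat]
  -- N identity
  have hN : ∀ z : ℝ, z < 1 → lam * (1 - z) - (1 - T z) = (1 - z) * (lam - f z) := by
    intro z hz
    have h1 : (1 : ℝ) - z ≠ 0 := by intro h; linarith [sub_eq_zero.mp h]
    have h2 : f z = (1 - T z) / (1 - z) := rfl
    rw [h2, mul_sub (1 - z) lam ((1 - T z) / (1 - z)), mul_div_cancel₀ _ h1]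
    ring
  -- existence of x₀
  have hx : lam ∈ Ioo (f a) (f 0) := by rw [hf0, hfa]; exact ⟨hlam1, hlam2⟩
  obtain ⟨x₀, hx₀mem, hx₀eq⟩ :=
    intermediate_value_Ioo' (le_of_lt ha0) (hfcont 0 a le_rfl (le_of_lt ha1) ha1) hx
  -- point d near 1 with f d > lam
  have hev : ∀ᶠ z in nhdsWithin (1:ℝ) (Iio 1), lam < f z :=
    hftop.eventually (eventually_gt_atTop lam)
  have hev2 : Ioo a 1 ∈ nhdsWithin (1:ℝ) (Iio 1) :=
    Ioo_mem_nhdsLT_of_mem ⟨ha1, le_rfl⟩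
  obtain ⟨d, hd1, hd2⟩ := (hev.and (eventually_of_mem hev2 (fun x hx => hx))).exists
  -- existence of y₀ in (a, d)
  have hy : lam ∈ Ioo (f a) (f d) := by rw [hfa]; exact ⟨hlam1, hd1⟩
  obtain ⟨y₀, hy₀mem, hy₀eq⟩ :=
    intermediate_value_Ioo (le_of_lt hd2.1) (hfcont a d (le_of_lt ha0) (le_of_lt hd2.2) hd2.2) hy
  have hy₀1 : y₀ < 1 := hy₀mem.2.trans hd2.2
  -- y₀ < c
  have hy₀c : y₀ < c := by
    rcases eq_or_lt_of_le hc1 with h | h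
    · rw [h]; exact hy₀1
    · by_contra hcon
      push_neg at hcon
      have hcmem : c ∈ Ico a 1 := ⟨le_of_lt hac, h⟩
      have hymem : y₀ ∈ Ico a 1 := ⟨le_of_lt hy₀mem.1, hy₀1⟩
      have : f c ≤ f y₀ := by
        rcases eq_or_lt_of_le hcon with h' | h'
        · rw [h']
        · exact le_of_lt (hfmono hcmem hymem h')
      have hfc : f c = 1 := by
        have : (1:ℝ) - c ≠ 0 := by intro hh; linarith [sub_eq_zero.mp hh]
        simp [hfdef, hTc, div_self this]
      rw [hfc, hy₀eq] at this
      linarith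
  refine ⟨x₀, y₀, hx₀mem, ⟨hy₀mem.1, hy₀c⟩, hx₀eq, hy₀eq, ?_, ?_, ?_, ?_, ?_⟩
  · -- uniqueness of x₀
    intro x' hx' hfx'
    exact hfanti.injOn ⟨le_of_lt hx'.1, le_of_lt hx'.2⟩
      ⟨le_of_lt hx₀mem.1, le_of_lt hx₀mem.2⟩ (hfx'.trans hx₀eq.symm)
  · -- uniqueness of y₀
    intro y' hy' hfy'
    have h1 : y' ∈ Ico a 1 := ⟨le_of_lt hy'.1, lt_of_lt_of_le hy'.2 hc1⟩
    have h2 : y₀ ∈ Ico a 1 := ⟨le_of_lt hy₀mem.1, hy₀1⟩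
    exact hfmono.injOn h1 h2 (hfy'.trans hy₀eq.symm)
  · -- negative on (0, x₀)
    intro z hz
    have hz1 : z < 1 := lt_trans (lt_trans hz.2 hx₀mem.2) ha1
    rw [hN z hz1]
    have hflt : lam < f z := by
      have := hfanti ⟨le_of_lt hz.1, le_of_lt (lt_trans hz.2 hx₀mem.2)⟩
        ⟨le_of_lt hx₀mem.1, le_of_lt hx₀mem.2⟩ hz.2
      rw [hx₀eq] at this; exact this
    exact mul_neg_of_pos_of_neg (by linarith) (by linarith)
  · -- positive on (x₀, y₀)
    intro z hz
    have hz1 : z < 1 := lt_trans hz.2 hy₀1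
    rw [hN z hz1]
    have hflt : f z < lam := by
      rcases le_or_gt z a with hza | hza
      · have := hfanti ⟨le_of_lt hx₀mem.1, le_of_lt hx₀mem.2⟩
          ⟨le_of_lt (lt_trans hx₀mem.1 hz.1), hza⟩ hz.1
        rw [hx₀eq] at this; exact this
      · have := hfmono ⟨le_of_lt hza, hz1⟩ ⟨le_of_lt hy₀mem.1, hy₀1⟩ hz.2
        rw [hy₀eq] at this; exact this
    exact mul_pos (by linarith) (by linarith)
  · -- negative on (y₀, 1)
    intro z hz
    obtain ⟨hzy, hz1⟩ := hz
    rw [hN z hz1]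
    have hflt : lam < f z := by
      have := hfmono ⟨le_of_lt hy₀mem.1, hy₀1⟩
        ⟨le_of_lt (lt_trans hy₀mem.1 hzy), hz1⟩ hzy
      rw [hy₀eq] at this; exact this
    exact mul_neg_of_pos_of_neg (by linarith) (by linarith)
end

section
/- (Monotonicity of l_Δ in Δ) Suppose A_u(z) = -u''(z)/u'(z) is strictly decreasing, and for Δ ∈ (0, E[X]) let W_Δ = W + (1+ρ)Δ and l_Δ the unique root in (a,c) of h_Δ(z) = ∫_0^z [u'(W_Δ - F_X⁻¹(z))(1-T(z))/(1-z) - u'(W_Δ - F_X⁻¹(t))T'(t)]dt. If 0 < Δ₁ < Δ₂ < E[X], then a < l_{Δ₁} < l_{Δ₂} < c. The key step: since W_{Δ₁} < W_{Δ₂} and F_X⁻¹(t) < F_X⁻¹(l_{Δ₁}) for t < l_{Δ₁}, strict decrease of A_u implies u'(W_{Δ₂}-F_X⁻¹(l_{Δ₁}))/u'(W_{Δ₁}-F_X⁻¹(l_{Δ₁})) < u'(W_{Δ₂}-F_X⁻¹(t))/u'(W_{Δ₁}-F_X⁻¹(t)), so h_{Δ₂}(l_{Δ₁}) < 0. -/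
open MeasureTheory Set intervalIntegral

/-- The function `h_Δ(z) = ∫₀ᶻ [u'(W_Δ - F_X⁻¹(z))(1-T(z))/(1-z)
- u'(W_Δ - F_X⁻¹(t))T'(t)] dt`. -/
noncomputable def hDelta (u T Finv : ℝ → ℝ) (WΔ : ℝ) (z : ℝ) : ℝ :=
  ∫ t in (0:ℝ)..z,
    (deriv u (WΔ - Finv z) * (1 - T z) / (1 - z) - deriv u (WΔ - Finv t) * deriv T t)

/-- If `A_u = -u''/u'` is strictly decreasing on `(0,∞)` and `u' > 0` there, then
for `0 < x < y` and `δ > 0` we have `u'(x+δ) u'(y) < u'(y+δ) u'(x)`. -/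
lemma ratio_of_Au_anti (u : ℝ → ℝ)
    (hudiff2 : ∀ x ∈ Ioi (0:ℝ), DifferentiableAt ℝ (deriv u) x)
    (hu'pos : ∀ x ∈ Ioi (0:ℝ), 0 < deriv u x)
    (hAu_anti : StrictAntiOn (fun x => -(deriv (deriv u) x) / deriv u x) (Ioi 0))
    (x y δ : ℝ) (hx : 0 < x) (hxy : x < y) (hδ : 0 < δ) :
    deriv u (x + δ) * deriv u y < deriv u (y + δ) * deriv u x := by
  set G : ℝ → ℝ := fun s => Real.log (deriv u (s + δ)) - Real.log (deriv u s) with hG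
  have hd : ∀ s ∈ Icc x y, HasDerivAt G
      (deriv (deriv u) (s + δ) / deriv u (s + δ) - deriv (deriv u) s / deriv u s) s := by
    intro s hs
    have hs0 : (0:ℝ) < s := lt_of_lt_of_le hx hs.1
    have hsδ : (0:ℝ) < s + δ := by linarith
    have h1 : HasDerivAt (fun t => Real.log (deriv u (t + δ)))
        (deriv (deriv u) (s + δ) / deriv u (s + δ)) s := by
      have := ((hudiff2 _ hsδ).hasDerivAt.comp_add_const s δ).log
        (ne_of_gt (hu'pos _ hsδ))
      simpa using this
    have h2 : HasDerivAt (fun t => Real.log (deriv u t))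
        (deriv (deriv u) s / deriv u s) s :=
      (hudiff2 _ hs0).hasDerivAt.log (ne_of_gt (hu'pos _ hs0))
    exact h1.sub h2
  have hmono : StrictMonoOn G (Icc x y) := by
    apply strictMonoOn_of_deriv_pos (convex_Icc x y)
    · exact fun s hs => ((hd s hs).continuousAt).continuousWithinAt
    · intro s hs
      rw [interior_Icc] at hs
      have hs' : s ∈ Icc x y := ⟨le_of_lt hs.1, le_of_lt hs.2⟩
      rw [(hd s hs').deriv]
      have hs0 : (0:ℝ) < s := lt_of_lt_of_le hx hs'.1
      have hsδ : (0:ℝ) < s + δ := by linarith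
      have := hAu_anti (mem_Ioi.2 hs0) (mem_Ioi.2 hsδ) (by linarith)
      simp only [neg_div] at this
      linarith
  have hGlt : G x < G y := hmono (left_mem_Icc.2 (le_of_lt hxy))
    (right_mem_Icc.2 (le_of_lt hxy)) hxy
  have p1 : 0 < deriv u (x + δ) := hu'pos _ (by simp; linarith)
  have p2 : 0 < deriv u (y + δ) := hu'pos _ (by simp; linarith)
  have p3 : 0 < deriv u x := hu'pos _ hx
  have p4 : 0 < deriv u y := hu'pos _ (by simp; linarith)
  have : Real.log (deriv u (x + δ) * deriv u y) < Real.log (deriv u (y + δ) * deriv u x) := by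
    rw [Real.log_mul (ne_of_gt p1) (ne_of_gt p4), Real.log_mul (ne_of_gt p2) (ne_of_gt p3)]
    simp only [hG] at hGlt
    linarith
  exact (Real.log_lt_log_iff (by positivity) (by positivity)).1 this

/-- Lemma 5.5: if `A_u` is strictly decreasing and
`0 < Δ₁ < Δ₂ < E[X]`, then the unique roots `l_{Δ₁}, l_{Δ₂} ∈ (a,c)` of
`h_{Δ₁}` and `h_{Δ₂}` satisfy `a < l_{Δ₁} < l_{Δ₂} < c`. -/
theorem lDelta_strictMono
    (u T : ℝ → ℝ) (b : ℝ) (hb : b ∈ Ioo (0:ℝ) 1)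
    (a c : ℝ) (ha : a ∈ Ioo 0 b) (hc : c ∈ Ioo a 1)
    (humono : StrictMonoOn u (Ici 0))
    (hudiff : ∀ x ∈ Ioi (0:ℝ), DifferentiableAt ℝ u x)
    (hudiff2 : ∀ x ∈ Ioi (0:ℝ), DifferentiableAt ℝ (deriv u) x)
    (hu'pos : ∀ x ∈ Ioi (0:ℝ), 0 < deriv u x)
    (hu'anti : StrictAntiOn (deriv u) (Ioi 0))
    (hAu_anti : StrictAntiOn (fun x => -(deriv (deriv u) x) / deriv u x) (Ioi 0))
    (hTdiff : ∀ z ∈ Ioo (0:ℝ) 1, DifferentiableAt ℝ T z)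
    (hT'pos : ∀ z ∈ Ioo (0:ℝ) 1, 0 < deriv T z)
    (haeq : deriv T a * (1 - a) = 1 - T a)
    (hTc : T c = c)
    (hfmono : StrictMonoOn (fun z => (1 - T z) / (1 - z)) (Ico a 1))
    (W ρ EX : ℝ) (hW : 0 < W) (hρ : -1 < ρ) (hEX : 0 < EX)
    (Finv : ℝ → ℝ) (hFinvMono : StrictMonoOn Finv (Icc 0 1))
    (hFinv0 : Finv 0 = 0)
    (hFinvW : ∀ z ∈ Icc (0:ℝ) 1, Finv z < W)
    (Δ₁ Δ₂ : ℝ) (hΔ1 : 0 < Δ₁) (hΔ12 : Δ₁ < Δ₂) (hΔ2 : Δ₂ < EX)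
    (l₁ l₂ : ℝ) (hl₁ : l₁ ∈ Ioo a c) (hl₂ : l₂ ∈ Ioo a c)
    (hroot₁ : hDelta u T Finv (W + (1 + ρ) * Δ₁) l₁ = 0)
    (hroot₂ : hDelta u T Finv (W + (1 + ρ) * Δ₂) l₂ = 0)
    -- established properties of `h_Δ`: strictly increasing on `[a,c]` with
    -- `h_Δ(a) < 0 < h_Δ(c)`, for each `Δ ∈ {Δ₁, Δ₂}`
    (hmono₁ : StrictMonoOn (hDelta u T Finv (W + (1 + ρ) * Δ₁)) (Icc a c))
    (hmono₂ : StrictMonoOn (hDelta u T Finv (W + (1 + ρ) * Δ₂)) (Icc a c))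
    (hsign₁ : hDelta u T Finv (W + (1 + ρ) * Δ₁) a < 0 ∧
      0 < hDelta u T Finv (W + (1 + ρ) * Δ₁) c)
    (hsign₂ : hDelta u T Finv (W + (1 + ρ) * Δ₂) a < 0 ∧
      0 < hDelta u T Finv (W + (1 + ρ) * Δ₂) c) :
    a < l₁ ∧ l₁ < l₂ ∧ l₂ < c := by
  have ha0 : 0 < a := ha.1
  have hc1 : c < 1 := hc.2
  have hal₁ : a < l₁ := hl₁.1
  have hl₁c : l₁ < c := hl₁.2
  have hl₁0 : 0 < l₁ := lt_trans ha0 hal₁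
  have hl₁1 : l₁ < 1 := lt_trans hl₁c hc1
  have hρ' : 0 < 1 + ρ := by linarith
  set W₁ : ℝ := W + (1 + ρ) * Δ₁ with hW₁def
  set W₂ : ℝ := W + (1 + ρ) * Δ₂ with hW₂def
  have hWW₁ : W < W₁ := by
    have : 0 < (1 + ρ) * Δ₁ := mul_pos hρ' hΔ1
    simp only [hW₁def]; linarith
  have hW₁W₂ : W₁ < W₂ := by
    have : (1 + ρ) * Δ₁ < (1 + ρ) * Δ₂ := by
      exact mul_lt_mul_of_pos_left hΔ12 hρ'
    simp only [hW₁def, hW₂def]; linarith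
  -- integrability of the nonconstant part of the integrand on [0, l₁],
  -- derived from strict monotonicity of hDelta on [a, c]
  have key_int : ∀ (WΔ : ℝ), StrictMonoOn (hDelta u T Finv WΔ) (Icc a c) →
      IntervalIntegrable (fun t => deriv u (WΔ - Finv t) * deriv T t) volume 0 l₁ := by
    intro WΔ hmono
    by_contra hnot
    set z' : ℝ := (l₁ + c) / 2 with hz'def
    set z'' : ℝ := (l₁ + 3 * c) / 4 with hz''def
    have hz'mem : z' ∈ Icc a c := ⟨by simp only [hz'def]; linarith, by simp only [hz'def]; linarith⟩
    have hz''mem : z'' ∈ Icc a c :=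
      ⟨by simp only [hz''def]; linarith, by simp only [hz''def]; linarith⟩
    have hz'z'' : z' < z'' := by simp only [hz'def, hz''def]; linarith
    have hzero : ∀ z : ℝ, l₁ ≤ z →
        hDelta u T Finv WΔ z = 0 := by
      intro z hz
      have hnonint : ¬ IntervalIntegrable (fun t => deriv u (WΔ - Finv t) * deriv T t)
          volume 0 z := by
        intro H
        exact hnot (H.mono_set (by
          rw [uIcc_of_le (le_of_lt hl₁0), uIcc_of_le (le_trans (le_of_lt hl₁0) hz)]
          exact Icc_subset_Icc le_rfl hz))
      unfold hDelta
      apply intervalIntegral.integral_undef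
      intro H
      have : IntervalIntegrable
          (fun t => deriv u (WΔ - Finv z) * (1 - T z) / (1 - z) -
            (deriv u (WΔ - Finv z) * (1 - T z) / (1 - z) - deriv u (WΔ - Finv t) * deriv T t))
          volume 0 z := intervalIntegrable_const.sub H
      simp only [sub_sub_cancel] at this
      exact hnonint this
    have h1 := hzero z' (by simp only [hz'def]; linarith)
    have h2 := hzero z'' (by simp only [hz''def]; linarith)
    have := hmono hz'mem hz''mem hz'z''
    rw [h1, h2] at this
    exact lt_irrefl 0 this
  have int₁ := key_int W₁ hmono₁
  have int₂ := key_int W₂ hmono₂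
  -- positivity facts at l₁
  have hl₁Icc : l₁ ∈ Icc (0:ℝ) 1 := ⟨le_of_lt hl₁0, le_of_lt hl₁1⟩
  have hFl₁ : Finv l₁ < W := hFinvW l₁ hl₁Icc
  have hxpos : 0 < W₁ - Finv l₁ := by linarith
  have d1l_pos : 0 < deriv u (W₁ - Finv l₁) := hu'pos _ hxpos
  have d2l_pos : 0 < deriv u (W₂ - Finv l₁) := hu'pos _ (by simp; linarith)
  set r : ℝ := deriv u (W₂ - Finv l₁) / deriv u (W₁ - Finv l₁) with hrdef
  -- pointwise strict inequality on (0, l₁)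
  have hpt : ∀ t ∈ Ioo (0:ℝ) l₁,
      0 < deriv u (W₂ - Finv t) * deriv T t - r * (deriv u (W₁ - Finv t) * deriv T t) := by
    intro t ht
    have htIcc : t ∈ Icc (0:ℝ) 1 := ⟨le_of_lt ht.1, by linarith [ht.2]⟩
    have hFt : Finv t < Finv l₁ := hFinvMono htIcc hl₁Icc ht.2
    have hkey := ratio_of_Au_anti u hudiff2 hu'pos hAu_anti
      (W₁ - Finv l₁) (W₁ - Finv t) (W₂ - W₁) hxpos (by linarith) (by linarith)
    have e1 : W₁ - Finv l₁ + (W₂ - W₁) = W₂ - Finv l₁ := by ring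
    have e2 : W₁ - Finv t + (W₂ - W₁) = W₂ - Finv t := by ring
    rw [e1, e2] at hkey
    have hT' : 0 < deriv T t := hT'pos t ⟨ht.1, by linarith [ht.2]⟩
    have hlt : r * deriv u (W₁ - Finv t) < deriv u (W₂ - Finv t) := by
      rw [hrdef, div_mul_eq_mul_div, div_lt_iff₀ d1l_pos]
      linarith
    nlinarith
  -- the strict integral inequality
  have hintpos : 0 < ∫ t in (0:ℝ)..l₁,
      (deriv u (W₂ - Finv t) * deriv T t - r * (deriv u (W₁ - Finv t) * deriv T t)) :=
    intervalIntegral_pos_of_pos_on (int₂.sub (int₁.const_mul r)) hpt hl₁0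
  -- split the two hDelta values
  have hsplit : ∀ (WΔ : ℝ),
      IntervalIntegrable (fun t => deriv u (WΔ - Finv t) * deriv T t) volume 0 l₁ →
      hDelta u T Finv WΔ l₁ = l₁ * (deriv u (WΔ - Finv l₁) * (1 - T l₁) / (1 - l₁)) -
        ∫ t in (0:ℝ)..l₁, deriv u (WΔ - Finv t) * deriv T t := by
    intro WΔ hint
    unfold hDelta
    rw [intervalIntegral.integral_sub intervalIntegrable_const hint,
      intervalIntegral.integral_const]
    simp [smul_eq_mul]
  have hs₁ := hsplit W₁ int₁
  have hs₂ := hsplit W₂ int₂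
  have hC : deriv u (W₂ - Finv l₁) * (1 - T l₁) / (1 - l₁) =
      r * (deriv u (W₁ - Finv l₁) * (1 - T l₁) / (1 - l₁)) := by
    have hne : deriv u (W₁ - Finv l₁) ≠ 0 := ne_of_gt d1l_pos
    have hne1 : (1:ℝ) - l₁ ≠ 0 := by linarith
    rw [hrdef]
    field_simp
  have hintsub : (∫ t in (0:ℝ)..l₁,
      (deriv u (W₂ - Finv t) * deriv T t - r * (deriv u (W₁ - Finv t) * deriv T t))) =
      (∫ t in (0:ℝ)..l₁, deriv u (W₂ - Finv t) * deriv T t) -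
        r * ∫ t in (0:ℝ)..l₁, deriv u (W₁ - Finv t) * deriv T t := by
    rw [intervalIntegral.integral_sub int₂ (int₁.const_mul r),
      intervalIntegral.integral_const_mul]
  -- conclude h₂(l₁) < 0
  have hneg : hDelta u T Finv W₂ l₁ < 0 := by
    have hI₁ : (∫ t in (0:ℝ)..l₁, deriv u (W₁ - Finv t) * deriv T t) =
        l₁ * (deriv u (W₁ - Finv l₁) * (1 - T l₁) / (1 - l₁)) := by
      have h10 : hDelta u T Finv W₁ l₁ = 0 := hroot₁
      rw [hs₁] at h10
      linarith
    rw [hintsub, hI₁] at hintpos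
    rw [hs₂, hC]
    have hring : l₁ * (r * (deriv u (W₁ - Finv l₁) * (1 - T l₁) / (1 - l₁))) =
        r * (l₁ * (deriv u (W₁ - Finv l₁) * (1 - T l₁) / (1 - l₁))) := by ring
    linarith
  -- conclude l₁ < l₂
  have hl₁l₂ : l₁ < l₂ := by
    by_contra hnot
    push_neg at hnot
    rcases eq_or_lt_of_le hnot with heq | hlt
    · rw [heq] at hroot₂
      rw [hroot₂] at hneg
      exact lt_irrefl 0 hneg
    · have := hmono₂ ⟨le_of_lt hl₂.1, le_of_lt hl₂.2⟩ ⟨le_of_lt hal₁, le_of_lt hl₁c⟩ hlt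
      rw [hroot₂] at this
      linarith
  exact ⟨hal₁, hl₁l₂, hl₂.2⟩
end
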